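/- Let q_N be the empirical distribution function of the Minkowski sequence 𝓜_N, i.e. q_N(x) = (1/m_N)·#{r ∈ 𝓜_N : r ≤ x} with m_N = 2^{N-1}+1. Then sup_{x ∈ [0,1]} |q_N(x) − q(x)| ≤ 1/(2^{N-1}+1), hence q_N → q uniformly on [0,1]. -/

import Mathlib

/-- The self-similarity operator for Minkowski's question mark function. -/
noncomputable def minkT (f : ℝ → ℝ) : ℝ → ℝ := fun x =>
  if x ≤ 1/2 then (1/2) * f (x / (1 - x)) else 1 - (1/2) * f ((1 - x) / x)

/-- Minkowski's question mark function, obtained as the (uniform) limit of the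
iteration of `minkT` starting from the identity distribution function. -/
noncomputable def minkQ : ℝ → ℝ := fun x =>
  Filter.limUnder Filter.atTop (fun n => (minkT^[n] id) x)
/-- The mediant of two rational numbers. -/
def mediant (x y : ℚ) : ℚ := ((x.num + y.num : ℤ) : ℚ) / ((x.den + y.den : ℕ) : ℚ)

/-- Insert the mediants of all pairs of consecutive entries of a list. -/
def insertMediants : List ℚ → List ℚ
  | [] => []
  | [x] => [x]
  | x :: y :: rest => x :: mediant x y :: insertMediants (y :: rest)

/-- The Minkowski sequence: `minkSeq (N - 1)` is the sorted list of elements of `𝓜_N`,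
with `𝓜_1 = (0, 1)`. -/
def minkSeq : ℕ → List ℚ
  | 0 => [0, 1]
  | n + 1 => insertMediants (minkSeq n)

open Classical in
/-- The empirical distribution function of the Minkowski sequence `𝓜_N = minkSeq (N-1)`. -/
noncomputable def empQ (N : ℕ) (x : ℝ) : ℝ :=
  ((minkSeq (N - 1)).countP (fun r => decide ((r : ℝ) ≤ x))) / (2 ^ (N - 1) + 1)

/-!
The maps `x ↦ x / (x + 1)` and `x ↦ 1 / (2 - x)` are Möbius transformations of determinant one,
so they send reduced fractions to reduced fractions and commute with taking mediants; hence
`𝓜_{n+1}` is the image of `𝓜_n` under the first map followed by its image under the second.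
The limit `q = minkQ` of the iterates of `minkT` satisfies `q (x / (1 + x)) = q x / 2` and
`q (1 / (2 - x)) = 1 / 2 + q x / 2`, so by induction `q` maps `𝓜_n` onto the dyadic grid
`{i / 2 ^ n : 0 ≤ i ≤ 2 ^ n}`. As `q` is monotone, the number of points of `𝓜_n` below `x` lies
between `2 ^ n q(x)` and `2 ^ n q(x) + 1`.
-/

open Set Filter Topology

def mobius (a b c d : ℤ) (x : ℚ) : ℚ := (a * x + b) / (c * x + d)

section Mobius

variable {a b c d : ℤ}

lemma mobius_intCast_div (p q : ℤ) (hq : q ≠ 0) :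
    mobius a b c d (p / q) = ((a * p + b * q : ℤ) : ℚ) / ((c * p + d * q : ℤ) : ℚ) := by
  have hq' : (q : ℚ) ≠ 0 := by exact_mod_cast hq
  rw [mobius, ← div_div_div_cancel_right₀ hq' ((a * p + b * q : ℤ) : ℚ)]
  push_cast
  congr 1 <;> field_simp

lemma IsCoprime.mul_add_mul_of_det_eq_one {p q : ℤ} (hdet : a * d - b * c = 1)
    (hpq : IsCoprime p q) :
    IsCoprime (a * p + b * q) (c * p + d * q) := by
  obtain ⟨u, v, huv⟩ := hpq
  exact ⟨u * d - v * c, v * a - u * b, by linear_combination (p * u + q * v) * hdet + huv⟩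

lemma mobius_num_den (hdet : a * d - b * c = 1) {x : ℚ} (hx : 0 < c * x.num + d * x.den) :
    (mobius a b c d x).num = a * x.num + b * x.den ∧
      ((mobius a b c d x).den : ℤ) = c * x.num + d * x.den := by
  have hcop : (a * x.num + b * x.den).natAbs.Coprime (c * x.num + d * x.den).natAbs :=
    Int.isCoprime_iff_gcd_eq_one.mp <|
      IsCoprime.mul_add_mul_of_det_eq_one hdet (Int.isCoprime_iff_gcd_eq_one.mpr x.reduced)
  have hM := mobius_intCast_div (a := a) (b := b) (c := c) (d := d) x.num x.den
    (by exact_mod_cast x.den_nz)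
  rw [Int.cast_natCast, Rat.num_div_den] at hM
  rw [hM]
  exact ⟨Rat.num_div_eq_of_coprime hx hcop, Rat.den_div_eq_of_coprime hx hcop⟩

lemma mediant_mobius (hdet : a * d - b * c = 1) {x y : ℚ} (hx : 0 < c * x.num + d * x.den)
    (hy : 0 < c * y.num + d * y.den) :
    mediant (mobius a b c d x) (mobius a b c d y) = mobius a b c d (mediant x y) := by
  obtain ⟨hxn, hxd⟩ := mobius_num_den hdet hx
  obtain ⟨hyn, hyd⟩ := mobius_num_den hdet hy
  have hxd' : ((mobius a b c d x).den : ℚ) = c * x.num + d * x.den := by exact_mod_cast hxd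
  have hyd' : ((mobius a b c d y).den : ℚ) = c * y.num + d * y.den := by exact_mod_cast hyd
  have hmed : mediant x y = ((x.num + y.num : ℤ) : ℚ) / ((x.den + y.den : ℤ) : ℚ) := by
    rw [mediant]; push_cast; rfl
  rw [hmed, mobius_intCast_div _ _ (by positivity), mediant, hxn, hyn]
  push_cast
  rw [hxd', hyd']
  ring

end Mobius

lemma mediant_mem_Icc {x y : ℚ} (hx : x ∈ Icc 0 1) (hy : y ∈ Icc 0 1) :
    mediant x y ∈ Icc 0 1 := by
  have hxn : (0 : ℚ) ≤ x.num := by exact_mod_cast Rat.num_nonneg.mpr hx.1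
  have hyn : (0 : ℚ) ≤ y.num := by exact_mod_cast Rat.num_nonneg.mpr hy.1
  have hxd : (x.num : ℚ) ≤ x.den := by exact_mod_cast Rat.num_le_denom_iff.mpr hx.2
  have hyd : (y.num : ℚ) ≤ y.den := by exact_mod_cast Rat.num_le_denom_iff.mpr hy.2
  have hden : (0 : ℚ) < x.den + y.den := by positivity
  rw [mediant]
  push_cast
  exact ⟨by positivity, (div_le_one hden).mpr (by linarith)⟩

lemma insertMediants_cons (a : ℚ) (w : List ℚ) :
    insertMediants (a :: w) = a :: (insertMediants (a :: w)).tail := by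
  cases w <;> rfl

lemma insertMediants_append_cons :
    ∀ (u : List ℚ) (a : ℚ) (w : List ℚ),
      insertMediants (u ++ a :: w) = insertMediants (u ++ [a]) ++ (insertMediants (a :: w)).tail
  | [], a, w => insertMediants_cons a w
  | [x], a, w => by
    rw [List.singleton_append, insertMediants, insertMediants_cons a w]
    rfl
  | x :: y :: u, a, w => by
    simp only [List.cons_append, insertMediants]
    rw [← List.cons_append, insertMediants_append_cons (y :: u) a w]
    rfl

lemma getLast?_insertMediants : ∀ l : List ℚ, (insertMediants l).getLast? = l.getLast?
  | [] => rfl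
  | [_] => rfl
  | x :: y :: rest => by
    rw [insertMediants, insertMediants_cons, List.getLast?_cons_cons, List.getLast?_cons_cons,
      ← insertMediants_cons, getLast?_insertMediants, List.getLast?_cons_cons]

lemma length_insertMediants : ∀ l : List ℚ, (insertMediants l).length = 2 * l.length - 1
  | [] => rfl
  | [_] => rfl
  | x :: y :: rest => by
    simp only [insertMediants, List.length_cons, length_insertMediants (y :: rest)]
    omega

lemma insertMediants_map {f : ℚ → ℚ} :
    ∀ {l : List ℚ}, (∀ x ∈ l, ∀ y ∈ l, mediant (f x) (f y) = f (mediant x y)) →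
      insertMediants (l.map f) = (insertMediants l).map f
  | [], _ => rfl
  | [_], _ => rfl
  | x :: y :: rest, hf => by
    simp only [List.map_cons, insertMediants]
    rw [hf x (by simp) y (by simp), ← List.map_cons,
      insertMediants_map fun a ha b hb => hf a (.tail x ha) b (.tail x hb)]

lemma insertMediants_subset {s : Set ℚ} (hs : ∀ x ∈ s, ∀ y ∈ s, mediant x y ∈ s) :
    ∀ {l : List ℚ}, (∀ x ∈ l, x ∈ s) → ∀ x ∈ insertMediants l, x ∈ s
  | [], _ => by simp [insertMediants]
  | [_], hl => hl
  | x :: y :: rest, hl => by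
    simp only [insertMediants, List.forall_mem_cons]
    refine ⟨hl x (by simp), hs x (hl x (by simp)) y (hl y (by simp)), ?_⟩
    exact insertMediants_subset hs fun a ha => hl a (.tail x ha)

lemma minkSeq_subset_Icc (n : ℕ) : ∀ r ∈ minkSeq n, r ∈ Icc (0 : ℚ) 1 := by
  induction n with
  | zero => simp [minkSeq]
  | succ n ih => exact insertMediants_subset (fun x hx y hy => mediant_mem_Icc hx hy) ih

lemma length_minkSeq (n : ℕ) : (minkSeq n).length = 2 ^ n + 1 := by
  induction n with
  | zero => rfl
  | succ n ih =>
    rw [minkSeq, length_insertMediants, ih, pow_succ]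
    omega

lemma head?_minkSeq (n : ℕ) : (minkSeq n).head? = some 0 := by
  induction n with
  | zero => rfl
  | succ n ih =>
    obtain ⟨t, ht⟩ := List.head?_eq_some_iff.mp ih
    rw [minkSeq, ht, insertMediants_cons, List.head?_cons]

lemma getLast?_minkSeq (n : ℕ) : (minkSeq n).getLast? = some 1 := by
  induction n with
  | zero => rfl
  | succ n ih => rw [minkSeq, getLast?_insertMediants, ih]

lemma insertMediants_map_mobius_left {l : List ℚ} (hl : ∀ r ∈ l, r ∈ Icc (0 : ℚ) 1) :
    insertMediants (l.map (mobius 1 0 1 1)) = (insertMediants l).map (mobius 1 0 1 1) := by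
  have hpos : ∀ r ∈ l, (0 : ℤ) < 1 * r.num + 1 * r.den := fun r hr => by
    have := Rat.num_nonneg.mpr (hl r hr).1
    have := r.den_pos
    omega
  exact insertMediants_map fun x hx y hy => mediant_mobius (by norm_num) (hpos x hx) (hpos y hy)

lemma insertMediants_map_mobius_right {l : List ℚ} (hl : ∀ r ∈ l, r ∈ Icc (0 : ℚ) 1) :
    insertMediants (l.map (mobius 0 1 (-1) 2)) = (insertMediants l).map (mobius 0 1 (-1) 2) := by
  have hpos : ∀ r ∈ l, (0 : ℤ) < -1 * r.num + 2 * r.den := fun r hr => by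
    have := Rat.num_le_denom_iff.mpr (hl r hr).2
    have := r.den_pos
    omega
  exact insertMediants_map fun x hx y hy => mediant_mobius (by norm_num) (hpos x hx) (hpos y hy)

lemma minkSeq_succ_eq (n : ℕ) :
    minkSeq (n + 1) =
      (minkSeq n).map (mobius 1 0 1 1) ++ ((minkSeq n).map (mobius 0 1 (-1) 2)).tail := by
  induction n with
  | zero => norm_num [minkSeq, insertMediants, mediant, mobius]
  | succ n ih =>
    set L := mobius 1 0 1 1
    set R := mobius 0 1 (-1) 2
    obtain ⟨t, hhead⟩ := List.head?_eq_some_iff.mp (head?_minkSeq n)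
    obtain ⟨u, hlast⟩ := List.getLast?_eq_some_iff.mp (getLast?_minkSeq n)
    -- the two halves are glued at `L 1 = R 0 = 1 / 2`
    have hL : (minkSeq n).map L = u.map L ++ [R 0] := by
      rw [hlast, List.map_append]
      norm_num [L, R, mobius]
    have hR : (minkSeq n).map R = R 0 :: t.map R := by rw [hhead, List.map_cons]
    have hIcc := minkSeq_subset_Icc n
    calc minkSeq (n + 1 + 1) = insertMediants (u.map L ++ R 0 :: t.map R) := by
          rw [minkSeq, ih, hL, hR, List.tail_cons, List.append_assoc, List.singleton_append]
      _ = insertMediants ((minkSeq n).map L) ++ (insertMediants ((minkSeq n).map R)).tail := by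
          rw [insertMediants_append_cons, hL, hR]
      _ = _ := by
          rw [insertMediants_map_mobius_left hIcc, insertMediants_map_mobius_right hIcc]
          rfl

section MinkT

variable {f g : ℝ → ℝ}

lemma div_one_sub_mem_Icc {x : ℝ} (h0 : 0 ≤ x) (h1 : x ≤ 1 / 2) :
    x / (1 - x) ∈ Icc (0 : ℝ) 1 :=
  ⟨div_nonneg h0 (by linarith), (div_le_one (by linarith)).mpr (by linarith)⟩

lemma one_sub_div_mem_Icc {x : ℝ} (h0 : 1 / 2 < x) (h1 : x ≤ 1) :
    (1 - x) / x ∈ Icc (0 : ℝ) 1 :=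
  ⟨div_nonneg (by linarith) (by linarith), (div_le_one (by linarith)).mpr (by linarith)⟩

lemma div_one_add_mem_Icc {x : ℝ} (hx : x ∈ Icc (0 : ℝ) 1) :
    x / (1 + x) ∈ Icc (0 : ℝ) 1 :=
  ⟨div_nonneg hx.1 (by linarith [hx.1]), (div_le_one (by linarith [hx.1])).mpr (by linarith)⟩

lemma minkT_mapsTo (hf : MapsTo f (Icc 0 1) (Icc 0 1)) :
    MapsTo (minkT f) (Icc 0 1) (Icc 0 1) := by
  rintro x ⟨h0, h1⟩
  unfold minkT
  split_ifs with h
  · have := hf (div_one_sub_mem_Icc h0 h)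
    exact ⟨by linarith [this.1], by linarith [this.2]⟩
  · have := hf (one_sub_div_mem_Icc (not_le.mp h) h1)
    exact ⟨by linarith [this.2], by linarith [this.1]⟩

lemma abs_minkT_sub_le {C : ℝ} (h : ∀ y ∈ Icc (0 : ℝ) 1, |f y - g y| ≤ C) :
    ∀ x ∈ Icc (0 : ℝ) 1, |minkT f x - minkT g x| ≤ C / 2 := by
  rintro x ⟨h0, h1⟩
  unfold minkT
  split_ifs with hx
  · have := h _ (div_one_sub_mem_Icc h0 hx)
    rw [← mul_sub, abs_mul, abs_of_pos one_half_pos]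
    linarith
  · have := h _ (one_sub_div_mem_Icc (not_le.mp hx) h1)
    rw [sub_sub_sub_cancel_left, ← mul_sub, abs_mul, abs_of_pos one_half_pos, abs_sub_comm]
    linarith

lemma minkT_monotoneOn (hf : MonotoneOn f (Icc 0 1)) (hf' : MapsTo f (Icc 0 1) (Icc 0 1)) :
    MonotoneOn (minkT f) (Icc 0 1) := by
  rintro x ⟨hx0, hx1⟩ y ⟨hy0, hy1⟩ hxy
  unfold minkT
  split_ifs with hx hy hy
  · have : x / (1 - x) ≤ y / (1 - y) := by
      rw [div_le_div_iff₀ (by linarith) (by linarith)]; nlinarith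
    linarith [hf (div_one_sub_mem_Icc hx0 hx) (div_one_sub_mem_Icc hy0 hy) this]
  · linarith [(hf' (div_one_sub_mem_Icc hx0 hx)).2,
      (hf' (one_sub_div_mem_Icc (not_le.mp hy) hy1)).2]
  · exact absurd (hxy.trans hy) hx
  · have : (1 - y) / y ≤ (1 - x) / x := by
      rw [div_le_div_iff₀ (by linarith) (by linarith)]; nlinarith
    linarith [hf (one_sub_div_mem_Icc (not_le.mp hy) hy1)
      (one_sub_div_mem_Icc (not_le.mp hx) hx1) this]

lemma minkT_zero : minkT f 0 = f 0 / 2 := by norm_num [minkT]; ring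

lemma minkT_one : minkT f 1 = 1 - f 0 / 2 := by norm_num [minkT]; ring

lemma minkT_one_sub (hf : f 1 = 1) (x : ℝ) : minkT f (1 - x) = 1 - minkT f x := by
  unfold minkT
  rcases lt_trichotomy x (1 / 2) with hx | rfl | hx
  · rw [if_neg (by linarith), if_pos hx.le, sub_sub_cancel]
  · norm_num [hf]
  · rw [if_pos (by linarith), if_neg (by linarith), sub_sub_cancel]
    ring

lemma minkT_div_one_add {x : ℝ} (hx₀ : -1 < x) (hx₁ : x ≤ 1) :
    minkT f (x / (1 + x)) = f x / 2 := by
  have hx' : (0 : ℝ) < 1 + x := by linarith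
  have hle : x / (1 + x) ≤ 1 / 2 := by
    rw [div_le_div_iff₀ hx' two_pos]; linarith
  rw [minkT, if_pos hle, one_sub_div hx'.ne', add_sub_cancel_right,
    div_div_div_cancel_right₀ hx'.ne', div_one]
  ring

end MinkT

lemma minkT_iterate_succ (n : ℕ) : minkT^[n + 1] id = minkT (minkT^[n] id) :=
  Function.iterate_succ_apply' _ _ _

lemma minkT_iterate_zero_one (n : ℕ) : minkT^[n] id 0 = 0 ∧ minkT^[n] id 1 = 1 := by
  induction n with
  | zero => simp
  | succ n ih => simp [minkT_iterate_succ, minkT_zero, minkT_one, ih.1]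

lemma minkT_iterate_mapsTo (n : ℕ) : MapsTo (minkT^[n] id) (Icc 0 1) (Icc 0 1) := by
  induction n with
  | zero => exact mapsTo_id _
  | succ n ih => rw [minkT_iterate_succ]; exact minkT_mapsTo ih

lemma minkT_iterate_monotoneOn (n : ℕ) : MonotoneOn (minkT^[n] id) (Icc 0 1) := by
  induction n with
  | zero => exact monotone_id.monotoneOn _
  | succ n ih => rw [minkT_iterate_succ]; exact minkT_monotoneOn ih (minkT_iterate_mapsTo n)

lemma abs_minkT_iterate_succ_sub_le (n : ℕ) :
    ∀ x ∈ Icc (0 : ℝ) 1, |minkT^[n + 1] id x - minkT^[n] id x| ≤ (1 / 2) ^ n := by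
  induction n with
  | zero =>
    intro x hx
    have h₁ := minkT_iterate_mapsTo 1 hx
    simpa using abs_sub_le_of_nonneg_of_le h₁.1 h₁.2 hx.1 hx.2
  | succ n ih =>
    intro x hx
    have h := abs_minkT_sub_le ih x hx
    rwa [← minkT_iterate_succ, ← minkT_iterate_succ, div_eq_mul_one_div, ← pow_succ] at h

lemma tendsto_minkT_iterate {x : ℝ} (hx : x ∈ Icc (0 : ℝ) 1) :
    Tendsto (fun n => minkT^[n] id x) atTop (𝓝 (minkQ x)) := by
  have hcauchy : CauchySeq fun n => minkT^[n] id x :=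
    cauchySeq_of_le_geometric (1 / 2) 1 (by norm_num) fun n => by
      rw [Real.dist_eq, abs_sub_comm, one_mul]
      exact abs_minkT_iterate_succ_sub_le n x hx
  obtain ⟨L, hL⟩ := cauchySeq_tendsto_of_complete hcauchy
  rwa [minkQ, hL.limUnder_eq]

lemma minkQ_zero : minkQ 0 = 0 :=
  tendsto_nhds_unique (tendsto_minkT_iterate (by norm_num))
    (by simp only [fun n => (minkT_iterate_zero_one n).1, tendsto_const_nhds])

lemma minkQ_one : minkQ 1 = 1 :=
  tendsto_nhds_unique (tendsto_minkT_iterate (by norm_num))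
    (by simp only [fun n => (minkT_iterate_zero_one n).2, tendsto_const_nhds])

lemma minkQ_mapsTo : MapsTo minkQ (Icc 0 1) (Icc 0 1) := fun _ hx =>
  isClosed_Icc.mem_of_tendsto (tendsto_minkT_iterate hx)
    (Eventually.of_forall fun n => minkT_iterate_mapsTo n hx)

lemma minkQ_monotoneOn : MonotoneOn minkQ (Icc 0 1) := fun _ hx _ hy hxy =>
  le_of_tendsto_of_tendsto' (tendsto_minkT_iterate hx) (tendsto_minkT_iterate hy)
    fun n => minkT_iterate_monotoneOn n hx hy hxy

lemma minkQ_one_sub {x : ℝ} (hx : x ∈ Icc (0 : ℝ) 1) : minkQ (1 - x) = 1 - minkQ x := by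
  have hx' : 1 - x ∈ Icc (0 : ℝ) 1 := ⟨by linarith [hx.2], by linarith [hx.1]⟩
  refine tendsto_nhds_unique (tendsto_minkT_iterate hx') ?_
  have hsymm : ∀ n, minkT^[n] id (1 - x) = 1 - minkT^[n] id x
    | 0 => rfl
    | n + 1 => by rw [minkT_iterate_succ, minkT_one_sub (minkT_iterate_zero_one n).2]
  simpa only [hsymm] using (tendsto_minkT_iterate hx).const_sub 1

lemma minkQ_div_one_add {x : ℝ} (hx : x ∈ Icc (0 : ℝ) 1) :
    minkQ (x / (1 + x)) = minkQ x / 2 := by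
  refine tendsto_nhds_unique
    ((tendsto_minkT_iterate (div_one_add_mem_Icc hx)).comp (tendsto_add_atTop_nat 1)) ?_
  have hstep : ∀ n, minkT^[n + 1] id (x / (1 + x)) = minkT^[n] id x / 2 := fun n => by
    rw [minkT_iterate_succ, minkT_div_one_add (by linarith [hx.1]) hx.2]
  simpa only [Function.comp_def, hstep] using (tendsto_minkT_iterate hx).div_const 2

lemma minkQ_one_div_two_sub {x : ℝ} (hx : x ∈ Icc (0 : ℝ) 1) :
    minkQ (1 / (2 - x)) = 1 / 2 + minkQ x / 2 := by
  have hx' : 1 - x ∈ Icc (0 : ℝ) 1 := ⟨by linarith [hx.2], by linarith [hx.1]⟩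
  have h : 1 / (2 - x) = 1 - (1 - x) / (1 + (1 - x)) := by
    rw [show 1 + (1 - x) = 2 - x by ring]
    field_simp [show (2 : ℝ) - x ≠ 0 by linarith [hx.2]]
    ring
  rw [h, minkQ_one_sub (div_one_add_mem_Icc hx'), minkQ_div_one_add hx', minkQ_one_sub hx]
  ring

lemma minkQ_mobius_left {r : ℚ} (hr : r ∈ Icc (0 : ℚ) 1) :
    minkQ (mobius 1 0 1 1 r) = minkQ r / 2 := by
  have hr' : (r : ℝ) ∈ Icc (0 : ℝ) 1 := ⟨by exact_mod_cast hr.1, by exact_mod_cast hr.2⟩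
  rw [← minkQ_div_one_add hr', mobius]
  push_cast
  ring_nf

lemma minkQ_mobius_right {r : ℚ} (hr : r ∈ Icc (0 : ℚ) 1) :
    minkQ (mobius 0 1 (-1) 2 r) = 1 / 2 + minkQ r / 2 := by
  have hr' : (r : ℝ) ∈ Icc (0 : ℝ) 1 := ⟨by exact_mod_cast hr.1, by exact_mod_cast hr.2⟩
  rw [← minkQ_one_div_two_sub hr', mobius]
  push_cast
  ring_nf

noncomputable def dyadicGrid (n : ℕ) : List ℝ :=
  (List.range (2 ^ n + 1)).map fun i : ℕ => (i : ℝ) / 2 ^ n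

lemma dyadicGrid_succ (n : ℕ) :
    dyadicGrid (n + 1) =
      (dyadicGrid n).map (· / 2) ++ ((dyadicGrid n).map fun v => 1 / 2 + v / 2).tail := by
  have htail (f : ℕ → ℝ) :
      ((List.range (2 ^ n + 1)).map f).tail = (List.range (2 ^ n)).map (f ∘ Nat.succ) := by
    rw [List.range_succ_eq_map, List.map_cons, List.tail_cons, List.map_map]
  have hsplit : 2 ^ (n + 1) + 1 = (2 ^ n + 1) + 2 ^ n := by ring
  rw [dyadicGrid, dyadicGrid, List.map_map, List.map_map, htail, hsplit, List.range_add,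
    List.map_append, List.map_map]
  congr 1 <;> refine List.map_congr_left fun i _ => ?_ <;> simp only [Function.comp_apply] <;>
    push_cast <;> field_simp <;> ring

lemma map_minkQ_minkSeq (n : ℕ) : (minkSeq n).map (fun r : ℚ => minkQ r) = dyadicGrid n := by
  induction n with
  | zero => simp [minkSeq, dyadicGrid, minkQ_zero, minkQ_one, List.range_succ]
  | succ n ih =>
    have hIcc := minkSeq_subset_Icc n
    rw [minkSeq_succ_eq, dyadicGrid_succ, ← ih]
    simp only [List.map_append, List.map_map, ← List.map_tail]
    congr 1 <;> refine List.map_congr_left fun r hr => ?_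
    · exact minkQ_mobius_left (hIcc r hr)
    · exact minkQ_mobius_right (hIcc r (List.mem_of_mem_tail hr))

lemma card_filter_range_natCast_le {t : ℝ} (ht : 0 ≤ t) (M : ℕ) :
    (((Finset.range M).filter fun i : ℕ => (i : ℝ) ≤ t).card : ℝ) ≤ t + 1 := by
  have hsub :
      (Finset.range M).filter (fun i : ℕ => (i : ℝ) ≤ t) ⊆ Finset.range (⌊t⌋₊ + 1) :=
    fun i hi => Finset.mem_range.mpr (Nat.lt_succ_of_le (Nat.le_floor (Finset.mem_filter.mp hi).2))
  calc (((Finset.range M).filter fun i : ℕ => (i : ℝ) ≤ t).card : ℝ) ≤ ⌊t⌋₊ + 1 := by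
        exact_mod_cast (Finset.card_le_card hsub).trans (Finset.card_range _).le
    _ ≤ t + 1 := by linarith [Nat.floor_le ht]

lemma card_filter_range_le_natCast {M : ℕ} {t : ℝ} (ht : t ≤ M) :
    (((Finset.range (M + 1)).filter fun i : ℕ => t ≤ (i : ℝ)).card : ℝ) ≤ M - t + 1 := by
  have hsub : (Finset.range (M + 1)).filter (fun i : ℕ => t ≤ (i : ℝ)) ⊆ Finset.Icc ⌈t⌉₊ M :=
    fun i hi => by
      rw [Finset.mem_filter, Finset.mem_range] at hi
      exact Finset.mem_Icc.mpr ⟨Nat.ceil_le.mpr hi.2, Nat.lt_succ_iff.mp hi.1⟩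
  have hceil : ⌈t⌉₊ ≤ M + 1 := (Nat.ceil_le.mpr ht).trans M.le_succ
  calc (((Finset.range (M + 1)).filter fun i : ℕ => t ≤ (i : ℝ)).card : ℝ)
        ≤ ((M + 1 - ⌈t⌉₊ : ℕ) : ℝ) := by
        exact_mod_cast (Finset.card_le_card hsub).trans (Nat.card_Icc _ _).le
    _ ≤ M - t + 1 := by
        rw [Nat.cast_sub hceil]
        push_cast
        linarith [Nat.le_ceil t]

section MonotoneCount

variable {α β : Type*} [Preorder α] [Preorder β] {s : Set α} {g : α → β} {l : List α}
  {x : α}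

lemma countP_le_countP_map_of_monotoneOn [DecidableLE α] [DecidableLE β] (hg : MonotoneOn g s)
    (hl : ∀ a ∈ l, a ∈ s) (hx : x ∈ s) :
    l.countP (fun a => a ≤ x) ≤ (l.map g).countP (fun b => b ≤ g x) := by
  rw [List.countP_map]
  exact List.countP_mono_left fun a ha h =>
    decide_eq_true (hg (hl a ha) hx (of_decide_eq_true h))

lemma countP_lt_le_countP_map_of_monotoneOn [DecidableLT α] [DecidableLE β]
    (hg : MonotoneOn g s) (hl : ∀ a ∈ l, a ∈ s) (hx : x ∈ s) :
    l.countP (fun a => x < a) ≤ (l.map g).countP (fun b => g x ≤ b) := by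
  rw [List.countP_map]
  exact List.countP_mono_left fun a ha h =>
    decide_eq_true (hg hx (hl a ha) (of_decide_eq_true h).le)

end MonotoneCount

lemma countP_dyadicGrid_le (n : ℕ) {q : ℝ} (hq : 0 ≤ q) :
    ((dyadicGrid n).countP (fun v => v ≤ q) : ℝ) ≤ 2 ^ n * q + 1 := by
  have hcount : (dyadicGrid n).countP (fun v => v ≤ q) =
      ((Finset.range (2 ^ n + 1)).filter fun i : ℕ => (i : ℝ) ≤ 2 ^ n * q).card := by
    rw [dyadicGrid, List.countP_map, ← Nat.count_eq_card_filter_range]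
    exact List.countP_congr fun i _ => by simp [div_le_iff₀, mul_comm]
  rw [hcount]
  exact card_filter_range_natCast_le (by positivity) _

lemma countP_dyadicGrid_ge (n : ℕ) {q : ℝ} (hq : q ≤ 1) :
    ((dyadicGrid n).countP (fun v => q ≤ v) : ℝ) ≤ 2 ^ n * (1 - q) + 1 := by
  have hcount : (dyadicGrid n).countP (fun v => q ≤ v) =
      ((Finset.range (2 ^ n + 1)).filter fun i : ℕ => 2 ^ n * q ≤ (i : ℝ)).card := by
    rw [dyadicGrid, List.countP_map, ← Nat.count_eq_card_filter_range]
    exact List.countP_congr fun i _ => by simp [le_div_iff₀, mul_comm]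
  rw [hcount]
  have h := card_filter_range_le_natCast (M := 2 ^ n) (t := 2 ^ n * q)
    (by push_cast; exact mul_le_of_le_one_right (by positivity) hq)
  push_cast at h
  linarith

lemma abs_empQ_sub_minkQ_le (N : ℕ) {x : ℝ} (hx : x ∈ Icc (0 : ℝ) 1) :
    |empQ N x - minkQ x| ≤ 1 / (2 ^ (N - 1) + 1) := by
  set n := N - 1
  set l : List ℝ := (minkSeq n).map fun r : ℚ => (r : ℝ)
  have hl : ∀ a ∈ l, a ∈ Icc (0 : ℝ) 1 := by
    simp only [l, List.mem_map]
    rintro _ ⟨r, hr, rfl⟩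
    exact ⟨by exact_mod_cast (minkSeq_subset_Icc n r hr).1,
      by exact_mod_cast (minkSeq_subset_Icc n r hr).2⟩
  have hgrid : l.map minkQ = dyadicGrid n := by rw [List.map_map]; exact map_minkQ_minkSeq n
  have hempQ : empQ N x = (l.countP (fun a => a ≤ x) : ℝ) / (2 ^ n + 1) := by
    -- `empQ` casts the list to `List ℝ` through the list monad
    rw [empQ]
    congr 3
    exact List.flatMap_pure_eq_map _ _
  obtain ⟨hq₀, hq₁⟩ := minkQ_mapsTo hx
  have hle : (l.countP (fun a => a ≤ x) : ℝ) ≤ 2 ^ n * minkQ x + 1 := by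
    have h := countP_le_countP_map_of_monotoneOn minkQ_monotoneOn hl hx
    rw [hgrid] at h
    exact (Nat.cast_le.mpr h).trans (countP_dyadicGrid_le n hq₀)
  have hgt : (l.countP (fun a => x < a) : ℝ) ≤ 2 ^ n * (1 - minkQ x) + 1 := by
    have h := countP_lt_le_countP_map_of_monotoneOn minkQ_monotoneOn hl hx
    rw [hgrid] at h
    exact (Nat.cast_le.mpr h).trans (countP_dyadicGrid_ge n hq₁)
  have hsum : (l.countP (fun a => a ≤ x) : ℝ) + l.countP (fun a => x < a) = 2 ^ n + 1 := by
    have h := List.length_eq_countP_add_countP (fun a => decide (a ≤ x)) (l := l)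
    simp only [l, List.length_map, length_minkSeq, decide_eq_true_eq, not_le] at h
    exact_mod_cast h.symm
  have hM : (0 : ℝ) < 2 ^ n + 1 := by positivity
  rw [hempQ, div_sub' hM.ne', abs_div, abs_of_pos hM]
  gcongr
  exact abs_le.mpr ⟨by linarith, by linarith⟩

theorem empQ_tendsto_minkQ :
    (∀ N : ℕ, 1 ≤ N → ∀ x ∈ Set.Icc (0:ℝ) 1,
      |empQ N x - minkQ x| ≤ 1 / (2 ^ (N - 1) + 1)) ∧
    TendstoUniformlyOn (fun N x => empQ N x) minkQ Filter.atTop (Set.Icc (0:ℝ) 1) := by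
  refine ⟨fun N _ x hx => abs_empQ_sub_minkQ_le N hx, ?_⟩
  have hbound : Tendsto (fun N : ℕ => (1 : ℝ) / (2 ^ (N - 1) + 1)) atTop (𝓝 0) := by
    simp only [one_div]
    exact tendsto_inv_atTop_zero.comp <| tendsto_atTop_add_const_right _ 1 <|
      (tendsto_pow_atTop_atTop_of_one_lt one_lt_two).comp (tendsto_sub_atTop_nat 1)
  rw [Metric.tendstoUniformlyOn_iff]
  intro ε hε
  filter_upwards [hbound.eventually_lt_const hε] with N hN x hx
  rw [dist_comm, Real.dist_eq]
  exact (abs_empQ_sub_minkQ_le N hx).trans_lt hN
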